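/- arXiv:2403.00646 — 2 statements merged into one kernel-verified Lean document; each statement's English description precedes it below -/
import Mathlib

section
/- A quadratic control system ẋ = Ax + H(x⊗x) + Bu with A = J - R (J skew-symmetric, R symmetric positive definite) and H energy-preserving is bounded-input bounded-state stable: for every essentially bounded input u and every initial condition x₀, every solution x(t) remains bounded for t ≥ 0. -/
open Matrix

/-!
The energy `E = x ⬝ᵥ x` is a Lyapunov function. Along solutions, `Ė = 2 x ⬝ᵥ ẋ`; the skew part
`J` and the energy-preserving `H` contribute nothing, `R` dissipates at least `c E` (with `c > 0`
the minimum of `v ⬝ᵥ R *ᵥ v` on the unit sphere), and Young's inequality absorbs the input term, so `Ė ≤ c (β ‖u‖∞² / c² - E)` with `β`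
the squared Frobenius norm of `B`. Grönwall's comparison then keeps `E(t)` below
`max (E 0) (β ‖u‖∞² / c²)` for all `t ≥ 0`.
-/

/-- The Euclidean 2-norm of a vector in `ℝⁿ`. -/
noncomputable def norm2 {n : ℕ} (v : Fin n → ℝ) : ℝ := Real.sqrt (v ⬝ᵥ v)

/-- The Kronecker product of two vectors, `(z ⊗ w)_{(j,k)} = z_j w_k`. -/
def kron {n : ℕ} (z w : Fin n → ℝ) : Fin n × Fin n → ℝ := fun p => z p.1 * w p.2

theorem exists_pos_mul_norm_sq_le_of_homogeneous {E : Type*} [NormedAddCommGroup E]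
    [NormedSpace ℝ E] [FiniteDimensional ℝ E] {q : E → ℝ} (hq : Continuous q)
    (hsmul : ∀ (t : ℝ) (v : E), q (t • v) = t ^ 2 * q v) (hpos : ∀ v ≠ 0, 0 < q v) :
    ∃ c > 0, ∀ v, c * ‖v‖ ^ 2 ≤ q v := by
  have hq0 : q 0 = 0 := by simpa using hsmul 0 0
  cases subsingleton_or_nontrivial E with
  | inl _ => exact ⟨1, one_pos, fun v => by simp [Subsingleton.elim v 0, hq0]⟩
  | inr _ =>
    obtain ⟨v₀, hv₀, hmin⟩ := (isCompact_sphere (0 : E) 1).exists_isMinOn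
      (NormedSpace.sphere_nonempty.mpr zero_le_one) hq.continuousOn
    have hv₀ : ‖v₀‖ = 1 := by simpa using hv₀
    refine ⟨q v₀, hpos v₀ (norm_ne_zero_iff.mp (by simp [hv₀])), fun v => ?_⟩
    rcases eq_or_ne v 0 with rfl | hv
    · simp [hq0]
    have hv' : ‖v‖ ≠ 0 := norm_ne_zero_iff.mpr hv
    have hunit : q v₀ ≤ q (‖v‖⁻¹ • v) := hmin (by simp [norm_smul, hv'])
    calc q v₀ * ‖v‖ ^ 2 ≤ q (‖v‖⁻¹ • v) * ‖v‖ ^ 2 := by gcongr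
      _ = q v := by rw [hsmul]; field_simp

section DotProduct

variable {ι κ : Type*} [Fintype ι] [Fintype κ]

lemma dotProduct_sq_le (a b : ι → ℝ) : (a ⬝ᵥ b) ^ 2 ≤ (a ⬝ᵥ a) * (b ⬝ᵥ b) := by
  simpa only [dotProduct, pow_two] using Finset.sum_mul_sq_le_sq_mul_sq Finset.univ a b

lemma two_mul_dotProduct_le {c : ℝ} (hc : 0 < c) (a b : ι → ℝ) :
    2 * (a ⬝ᵥ b) ≤ c * (a ⬝ᵥ a) + (b ⬝ᵥ b) / c := by
  have h : 0 ≤ (c • a - b) ⬝ᵥ (c • a - b) := dotProduct_self_star_nonneg _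
  simp only [sub_dotProduct, dotProduct_sub, smul_dotProduct, dotProduct_smul, smul_eq_mul,
    dotProduct_comm b a] at h
  rw [← sub_nonneg]
  have : c * (a ⬝ᵥ a) + (b ⬝ᵥ b) / c - 2 * (a ⬝ᵥ b)
      = (c * (c * (a ⬝ᵥ a) - a ⬝ᵥ b) - (c * (a ⬝ᵥ b) - b ⬝ᵥ b)) / c := by
    field_simp; ring
  exact this ▸ div_nonneg h hc.le

lemma Matrix.mulVec_dotProduct_mulVec_le (B : Matrix ι κ ℝ) (v : κ → ℝ) :
    B *ᵥ v ⬝ᵥ B *ᵥ v ≤ (∑ i, ∑ j, B i j ^ 2) * (v ⬝ᵥ v) := by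
  rw [Finset.sum_mul]
  refine Finset.sum_le_sum fun i _ => ?_
  simpa only [mulVec, dotProduct, pow_two] using dotProduct_sq_le (B i) v

lemma dotProduct_mulVec_self_eq_zero_of_transpose_eq_neg {R : Type*} [CommRing R]
    [NoZeroDivisors R] [CharZero R] {J : Matrix ι ι R} (hJ : Jᵀ = -J) (v : ι → R) :
    v ⬝ᵥ J *ᵥ v = 0 := by
  have h : v ⬝ᵥ J *ᵥ v = -(v ⬝ᵥ J *ᵥ v) := by
    conv_lhs => rw [dotProduct_mulVec, ← mulVec_transpose, hJ, dotProduct_comm]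
    rw [neg_mulVec, dotProduct_neg]
  exact self_eq_neg.mp h

lemma Matrix.PosDef.exists_pos_mul_dotProduct_self_le {R : Matrix ι ι ℝ} (hR : R.PosDef) :
    ∃ c > 0, ∀ v, c * (v ⬝ᵥ v) ≤ v ⬝ᵥ R *ᵥ v := by
  obtain ⟨c, hc, hcR⟩ := exists_pos_mul_norm_sq_le_of_homogeneous
    (q := fun w : EuclideanSpace ℝ ι => WithLp.ofLp w ⬝ᵥ R *ᵥ WithLp.ofLp w)
    (by fun_prop)
    (fun t w => by
      simp only [WithLp.ofLp_smul, mulVec_smul, smul_dotProduct, dotProduct_smul, smul_eq_mul]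
      ring)
    (fun w hw => by simpa using hR.dotProduct_mulVec_pos (x := WithLp.ofLp w) (by simpa using hw))
  refine ⟨c, hc, fun v => ?_⟩
  have := hcR (WithLp.toLp 2 v)
  rwa [← real_inner_self_eq_norm_sq, EuclideanSpace.inner_toLp_toLp, star_trivial] at this

theorem HasDerivAt.dotProduct {x y : ℝ → ι → ℝ} {x' y' : ι → ℝ} {t : ℝ}
    (hx : HasDerivAt x x' t) (hy : HasDerivAt y y' t) :
    HasDerivAt (fun s => x s ⬝ᵥ y s) (x' ⬝ᵥ y t + x t ⬝ᵥ y') t := by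
  unfold _root_.dotProduct
  rw [← Finset.sum_add_distrib]
  exact HasDerivAt.fun_sum fun i _ => (hasDerivAt_pi.mp hx i).mul (hasDerivAt_pi.mp hy i)

end DotProduct

theorem le_max_of_hasDerivAt_le_mul_sub {f f' : ℝ → ℝ} {c M : ℝ} (hc : 0 < c)
    (hf : ∀ t ≥ 0, HasDerivAt f (f' t) t) (hf' : ∀ t ≥ 0, f' t ≤ c * (M - f t))
    {t : ℝ} (ht : 0 ≤ t) : f t ≤ max (f 0) M := by
  have hgron := le_gronwallBound_of_liminf_deriv_right_le (δ := f 0) (K := -c) (ε := c * M)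
    (b := t) (fun s hs => (hf s hs.1).continuousAt.continuousWithinAt)
    (fun s hs _ hr => ((hf s hs.1).hasDerivWithinAt).liminf_right_slope_le hr)
    le_rfl (fun s hs => by linarith [hf' s hs.1]) t ⟨ht, le_rfl⟩
  rw [gronwallBound_of_K_ne_0 (neg_ne_zero.mpr hc.ne')] at hgron
  beta_reduce at hgron
  rw [sub_zero, div_neg, mul_div_cancel_left₀ _ hc.ne'] at hgron
  set e := Real.exp (-c * t)
  have he₀ : 0 ≤ e := (Real.exp_pos _).le
  have he₁ : e ≤ 1 := Real.exp_le_one_iff.mpr (by nlinarith)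
  calc f t ≤ e * f 0 + (1 - e) * M := by linarith
    _ ≤ e * max (f 0) M + (1 - e) * max (f 0) M := by
        gcongr
        exacts [le_max_left _ _, le_max_right _ _]
    _ = max (f 0) M := by ring

theorem two_mul_dotProduct_quadraticSystem_le {n m : ℕ} {J R : Matrix (Fin n) (Fin n) ℝ}
    {B : Matrix (Fin n) (Fin m) ℝ} {H : Matrix (Fin n) (Fin n × Fin n) ℝ} (hJ : Jᵀ = -J)
    {c : ℝ} (hc : 0 < c) (hcR : ∀ v, c * (v ⬝ᵥ v) ≤ v ⬝ᵥ R *ᵥ v)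
    (hEP : ∀ z : Fin n → ℝ, z ⬝ᵥ H *ᵥ kron z z = 0) (x : Fin n → ℝ) (w : Fin m → ℝ) :
    2 * (x ⬝ᵥ ((J - R) *ᵥ x + H *ᵥ kron x x + B *ᵥ w))
      ≤ -c * (x ⬝ᵥ x) + (B *ᵥ w ⬝ᵥ B *ᵥ w) / c := by
  rw [dotProduct_add, dotProduct_add, sub_mulVec, dotProduct_sub,
    dotProduct_mulVec_self_eq_zero_of_transpose_eq_neg hJ, hEP]
  linarith [hcR x, two_mul_dotProduct_le hc x (B *ᵥ w)]

/-- A quadratic control system `ẋ = (J-R)x + H(x⊗x) + Bu` with `J`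
skew-symmetric, `R` symmetric positive definite and `H` energy-preserving is
bounded-input bounded-state stable: any solution corresponding to a bounded
input remains bounded for `t ≥ 0`. -/
theorem stmt_8 {n m : ℕ} (J R : Matrix (Fin n) (Fin n) ℝ)
    (B : Matrix (Fin n) (Fin m) ℝ)
    (H : Matrix (Fin n) (Fin n × Fin n) ℝ)
    (hJ : Jᵀ = -J) (hR : R.PosDef)
    (hEP : ∀ z : Fin n → ℝ, z ⬝ᵥ H.mulVec (kron z z) = 0)
    (u : ℝ → Fin m → ℝ) (U : ℝ) (hU : ∀ t : ℝ, norm2 (u t) ≤ U)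
    (x : ℝ → Fin n → ℝ)
    (hx : ∀ t : ℝ, HasDerivAt x
      ((J - R).mulVec (x t) + H.mulVec (kron (x t) (x t)) + B.mulVec (u t)) t) :
    ∃ M : ℝ, ∀ t : ℝ, 0 ≤ t → norm2 (x t) ≤ M := by
  obtain ⟨c, hc, hcR⟩ := hR.exists_pos_mul_dotProduct_self_le
  set β := ∑ i, ∑ j, B i j ^ 2
  have hBu (t : ℝ) : B *ᵥ u t ⬝ᵥ B *ᵥ u t ≤ β * U ^ 2 :=
    (mulVec_dotProduct_mulVec_le B (u t)).trans <|
      mul_le_mul_of_nonneg_left (Real.sqrt_le_iff.mp (hU t)).2 (by positivity)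
  have henergy (t : ℝ) (ht : 0 ≤ t) :
      x t ⬝ᵥ x t ≤ max (x 0 ⬝ᵥ x 0) (β * U ^ 2 / c ^ 2) := by
    refine le_max_of_hasDerivAt_le_mul_sub hc (fun s _ => (hx s).dotProduct (hx s))
      (fun s _ => ?_) ht
    calc _ ⬝ᵥ x s + x s ⬝ᵥ _ ≤ -c * (x s ⬝ᵥ x s) + (B *ᵥ u s ⬝ᵥ B *ᵥ u s) / c := by
          rw [dotProduct_comm _ (x s), ← two_mul]
          exact two_mul_dotProduct_quadraticSystem_le hJ hc hcR hEP (x s) (u s)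
      _ ≤ -c * (x s ⬝ᵥ x s) + β * U ^ 2 / c := by gcongr; exact hBu s
      _ = c * (β * U ^ 2 / c ^ 2 - x s ⬝ᵥ x s) := by field_simp; ring
  exact ⟨√(max (x 0 ⬝ᵥ x 0) (β * U ^ 2 / c ^ 2)), fun t ht => Real.sqrt_le_sqrt (henergy t ht)⟩
end

section
/- Consider ẋ = (J-R)x + H(x⊗x) + Bu with J skew-symmetric, R symmetric positive definite, H energy-preserving, u essentially bounded, and let r = ‖B‖₂‖u‖_{L∞}/σ_min(R). If ‖x(0)‖₂ > r then ‖x(t)‖₂ is strictly decreasing as long as ‖x(t)‖₂ > r; in particular the closed ball of radius max{‖x(0)‖₂, r} centered at the origin is forward invariant for the trajectory. -/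
open Matrix

/-- The spectral norm (L2 operator norm) of a real matrix. -/
noncomputable def specNorm {n m : ℕ} (B : Matrix (Fin n) (Fin m) ℝ) : ℝ :=
  sSup {c | ∃ v : Fin m → ℝ, norm2 v ≤ 1 ∧ c = norm2 (B.mulVec v)}

/-- The smallest eigenvalue of a Hermitian real matrix. -/
noncomputable def sigmaMin {n : ℕ} (R : Matrix (Fin n) (Fin n) ℝ)
    (hR : R.IsHermitian) : ℝ := ⨅ i, hR.eigenvalues i

/-!
With `V(x) = ‖x‖₂²`, skew-symmetry of `J` and energy preservation of `H` kill two terms of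
`V̇ = 2 xᵀ((J - R)x + H(x ⊗ x) + Bu)`, while `xᵀRx ≥ σ_min(R)‖x‖₂²` and Cauchy–Schwarz give
`V̇ ≤ 2‖x‖₂ (‖B‖₂ U - σ_min(R)‖x‖₂) = 2 σ_min(R) ‖x‖₂ (r - ‖x‖₂)`, which is negative whenever
`‖x‖₂ > r`. A scalar function whose derivative is negative above a level `c` decreases strictly
while it stays above `c`, and comparison with the constants `max (V(0), r²) + ε` keeps it
below `max (V(0), r²)`.
-/

open Set

section Scalar

variable {g g' : ℝ → ℝ} {c : ℝ}

theorem strictAntiOn_Icc_of_hasDerivAt_neg_above (hg : ∀ t, HasDerivAt g (g' t) t)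
    (hneg : ∀ t, c < g t → g' t < 0) {a b : ℝ} (habove : ∀ s ∈ Icc a b, c < g s) :
    StrictAntiOn g (Icc a b) := by
  refine strictAntiOn_of_deriv_neg (convex_Icc a b)
    (fun s _ => (hg s).continuousAt.continuousWithinAt) fun s hs => ?_
  rw [(hg s).deriv]
  exact hneg s (habove s (interior_subset hs))

theorem le_max_of_hasDerivAt_neg_above (hg : ∀ t, HasDerivAt g (g' t) t)
    (hneg : ∀ t, c < g t → g' t < 0) {a t : ℝ} (ht : a ≤ t) : g t ≤ max (g a) c := by
  refine le_of_forall_pos_le_add fun ε hε => ?_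
  refine image_le_of_deriv_right_lt_deriv_boundary (f' := g') (B' := 0)
    (fun s _ => (hg s).continuousAt.continuousWithinAt) (fun s _ => (hg s).hasDerivWithinAt)
    (by linarith [le_max_left (g a) c]) (fun _ => hasDerivAt_const _ _)
    (fun s _ hs => hneg s ?_) ⟨ht, le_rfl⟩
  linarith [le_max_right (g a) c]

end Scalar

section EuclideanNorm

variable {n m : ℕ}

theorem norm2_eq_norm_toLp (v : Fin n → ℝ) :
    norm2 v = ‖(WithLp.toLp 2 v : EuclideanSpace ℝ (Fin n))‖ := by
  rw [norm2, EuclideanSpace.norm_eq]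
  simp [dotProduct, sq]

theorem norm2_nonneg (v : Fin n → ℝ) : 0 ≤ norm2 v := Real.sqrt_nonneg _

theorem norm2_sq (v : Fin n → ℝ) : norm2 v ^ 2 = v ⬝ᵥ v := by
  rw [norm2_eq_norm_toLp, ← real_inner_self_eq_norm_sq, EuclideanSpace.inner_eq_star_dotProduct]
  simp

theorem dotProduct_le_norm2_mul_norm2 (v w : Fin n → ℝ) : v ⬝ᵥ w ≤ norm2 v * norm2 w := by
  simpa [norm2_eq_norm_toLp, EuclideanSpace.inner_eq_star_dotProduct, dotProduct_comm] using
    real_inner_le_norm (WithLp.toLp 2 v : EuclideanSpace ℝ (Fin n)) (WithLp.toLp 2 w)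

theorem hasDerivAt_norm2_sq {x : ℝ → Fin n → ℝ} {x' : Fin n → ℝ} {t : ℝ}
    (hx : HasDerivAt x x' t) : HasDerivAt (fun s => norm2 (x s) ^ 2) (2 * (x t ⬝ᵥ x')) t := by
  simpa [norm2_eq_norm_toLp, EuclideanSpace.inner_eq_star_dotProduct, dotProduct_comm] using
    ((EuclideanSpace.equiv (Fin n) ℝ).symm.hasFDerivAt.comp_hasDerivAt t hx).norm_sq

theorem specNorm_eq_opNorm (B : Matrix (Fin n) (Fin m) ℝ) :
    specNorm B = ‖LinearMap.toContinuousLinearMap (Matrix.toEuclideanLin B)‖ := by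
  rw [← ContinuousLinearMap.sSup_unitClosedBall_eq_norm, specNorm]
  congr 1
  ext c
  simp only [mem_ofPred_eq, mem_image, Metric.mem_closedBall, dist_zero_right]
  constructor
  · rintro ⟨v, hv, rfl⟩
    exact ⟨WithLp.toLp 2 v, by rwa [← norm2_eq_norm_toLp], by rw [norm2_eq_norm_toLp]; rfl⟩
  · rintro ⟨v, hv, rfl⟩
    exact ⟨v.ofLp, by rwa [norm2_eq_norm_toLp], by rw [norm2_eq_norm_toLp]; rfl⟩

theorem specNorm_nonneg (B : Matrix (Fin n) (Fin m) ℝ) : 0 ≤ specNorm B := by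
  rw [specNorm_eq_opNorm]
  exact norm_nonneg _

theorem norm2_mulVec_le (B : Matrix (Fin n) (Fin m) ℝ) (v : Fin m → ℝ) :
    norm2 (B *ᵥ v) ≤ specNorm B * norm2 v := by
  rw [specNorm_eq_opNorm, norm2_eq_norm_toLp, norm2_eq_norm_toLp]
  exact (LinearMap.toContinuousLinearMap (Matrix.toEuclideanLin B)).le_opNorm (WithLp.toLp 2 v)

end EuclideanNorm

section SigmaMin

variable {n : ℕ} {R : Matrix (Fin n) (Fin n) ℝ}

theorem sigmaMin_le_eigenvalues (hR : R.IsHermitian) (i : Fin n) :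
    sigmaMin R hR ≤ hR.eigenvalues i :=
  ciInf_le (Finite.bddBelow_range _) i

theorem sigmaMin_nonneg (hR : R.PosSemidef) : 0 ≤ sigmaMin R hR.1 :=
  Real.iInf_nonneg hR.eigenvalues_nonneg

theorem sigmaMin_pos [Nonempty (Fin n)] (hR : R.PosDef) : 0 < sigmaMin R hR.1 := by
  obtain ⟨i, hi⟩ := Finite.exists_min hR.1.eigenvalues
  exact (hR.eigenvalues_pos i).trans_le (le_ciInf hi)

theorem sigmaMin_mul_dotProduct_self_le (hR : R.IsHermitian) (v : Fin n → ℝ) :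
    sigmaMin R hR * (v ⬝ᵥ v) ≤ v ⬝ᵥ R *ᵥ v := by
  set σ := sigmaMin R hR
  have hshift : R - σ • 1 = Unitary.conjStarAlgAut ℝ _ hR.eigenvectorUnitary
      (diagonal fun i => hR.eigenvalues i - σ) := by
    rw [show (diagonal fun i => hR.eigenvalues i - σ) = diagonal hR.eigenvalues - σ • 1 by
      ext i j; by_cases h : i = j <;> simp [h], map_sub, map_smul, map_one]
    congr 1
    exact hR.spectral_theorem
  have hpsd : (R - σ • 1).PosSemidef := by
    rw [hshift, Unitary.conjStarAlgAut_apply,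
      Unitary.isUnit_coe.posSemidef_star_right_conjugate_iff, posSemidef_diagonal_iff]
    exact fun i => sub_nonneg.2 (sigmaMin_le_eigenvalues hR i)
  simpa [sub_mulVec, smul_mulVec, dotProduct_smul] using hpsd.dotProduct_mulVec_nonneg v

end SigmaMin

theorem dotProduct_mulVec_self_eq_zero_of_transpose_eq_neg_s16 {n : ℕ}
    {J : Matrix (Fin n) (Fin n) ℝ} (hJ : Jᵀ = -J) (v : Fin n → ℝ) : v ⬝ᵥ J *ᵥ v = 0 := by
  have h : v ⬝ᵥ J *ᵥ v = (Jᵀ *ᵥ v) ⬝ᵥ v := by rw [dotProduct_mulVec, mulVec_transpose]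
  rw [hJ, neg_mulVec, neg_dotProduct, dotProduct_comm (J *ᵥ v)] at h
  linarith

section VectorField

variable {n m : ℕ} {J R : Matrix (Fin n) (Fin n) ℝ} {B : Matrix (Fin n) (Fin m) ℝ}
  {H : Matrix (Fin n) (Fin n × Fin n) ℝ} {x : Fin n → ℝ} {w : Fin m → ℝ}

theorem dotProduct_vectorField_le (hJ : Jᵀ = -J) (hR : R.IsHermitian)
    (hH : x ⬝ᵥ H *ᵥ kron x x = 0) :
    x ⬝ᵥ ((J - R) *ᵥ x + H *ᵥ kron x x + B *ᵥ w) ≤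
      specNorm B * norm2 w * norm2 x - sigmaMin R hR * norm2 x ^ 2 := by
  have hBw : x ⬝ᵥ B *ᵥ w ≤ specNorm B * norm2 w * norm2 x :=
    calc x ⬝ᵥ B *ᵥ w ≤ norm2 x * norm2 (B *ᵥ w) := dotProduct_le_norm2_mul_norm2 _ _
      _ ≤ norm2 x * (specNorm B * norm2 w) :=
        mul_le_mul_of_nonneg_left (norm2_mulVec_le B w) (norm2_nonneg x)
      _ = specNorm B * norm2 w * norm2 x := by ring
  have hRx := sigmaMin_mul_dotProduct_self_le hR x
  rw [← norm2_sq] at hRx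
  simp only [sub_mulVec, dotProduct_add, dotProduct_sub,
    dotProduct_mulVec_self_eq_zero_of_transpose_eq_neg_s16 hJ, hH]
  linarith

theorem dotProduct_vectorField_neg (hJ : Jᵀ = -J) (hR : R.PosDef)
    (hH : x ⬝ᵥ H *ᵥ kron x x = 0) {U : ℝ} (hw : norm2 w ≤ U)
    (hx : specNorm B * U / sigmaMin R hR.1 < norm2 x) :
    x ⬝ᵥ ((J - R) *ᵥ x + H *ᵥ kron x x + B *ᵥ w) < 0 := by
  set σ := sigmaMin R hR.1
  have hr : 0 ≤ specNorm B * U / σ := div_nonneg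
    (mul_nonneg (specNorm_nonneg B) ((norm2_nonneg w).trans hw)) (sigmaMin_nonneg hR.posSemidef)
  have hxpos : 0 < norm2 x := hr.trans_lt hx
  have : Nonempty (Fin n) := by
    by_contra h
    rw [not_nonempty_iff] at h
    simp [norm2, dotProduct] at hxpos
  have hσ : 0 < σ := sigmaMin_pos hR
  have hBU : specNorm B * U < σ * norm2 x := (div_lt_iff₀' hσ).1 hx
  have hBw : specNorm B * norm2 w ≤ specNorm B * U :=
    mul_le_mul_of_nonneg_left hw (specNorm_nonneg B)
  calc x ⬝ᵥ ((J - R) *ᵥ x + H *ᵥ kron x x + B *ᵥ w)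
      ≤ specNorm B * norm2 w * norm2 x - σ * norm2 x ^ 2 := dotProduct_vectorField_le hJ hR.1 hH
    _ < 0 := by nlinarith

end VectorField

/-- For `ẋ = (J-R)x + H(x⊗x) + Bu` with `J` skew-symmetric, `R` symmetric
positive definite, `H` energy-preserving and bounded input, setting
`r = ‖B‖₂ U / σ_min(R)`: the state norm strictly decreases as long as it
exceeds `r`, and the closed ball of radius `max {‖x(0)‖₂, r}` is forward
invariant for the trajectory. -/
theorem stmt_16 {n m : ℕ} (J R : Matrix (Fin n) (Fin n) ℝ)
    (B : Matrix (Fin n) (Fin m) ℝ)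
    (H : Matrix (Fin n) (Fin n × Fin n) ℝ)
    (hJ : Jᵀ = -J) (hR : R.PosDef)
    (hEP : ∀ z : Fin n → ℝ, z ⬝ᵥ H.mulVec (kron z z) = 0)
    (u : ℝ → Fin m → ℝ) (U : ℝ) (hU : ∀ t : ℝ, norm2 (u t) ≤ U)
    (x : ℝ → Fin n → ℝ)
    (hx : ∀ t : ℝ, HasDerivAt x
      ((J - R).mulVec (x t) + H.mulVec (kron (x t) (x t)) + B.mulVec (u t)) t) :
    (∀ t₀ t₁ : ℝ, 0 ≤ t₀ → t₀ < t₁ →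
      (∀ s ∈ Set.Icc t₀ t₁,
        specNorm B * U / sigmaMin R hR.1 < norm2 (x s)) →
      norm2 (x t₁) < norm2 (x t₀)) ∧
    (∀ t : ℝ, 0 ≤ t →
      norm2 (x t) ≤ max (norm2 (x 0)) (specNorm B * U / sigmaMin R hR.1)) := by
  set r := specNorm B * U / sigmaMin R hR.1
  have hr : 0 ≤ r := div_nonneg (mul_nonneg (specNorm_nonneg B) ((norm2_nonneg _).trans (hU 0)))
    (sigmaMin_nonneg hR.posSemidef)
  have hV : ∀ t, HasDerivAt (fun s => norm2 (x s) ^ 2)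
      (2 * (x t ⬝ᵥ ((J - R) *ᵥ x t + H *ᵥ kron (x t) (x t) + B *ᵥ u t))) t :=
    fun t => hasDerivAt_norm2_sq (hx t)
  have hV_neg : ∀ t, r ^ 2 < norm2 (x t) ^ 2 →
      2 * (x t ⬝ᵥ ((J - R) *ᵥ x t + H *ᵥ kron (x t) (x t) + B *ᵥ u t)) < 0 := fun t ht =>
    mul_neg_of_pos_of_neg two_pos <| dotProduct_vectorField_neg hJ hR (hEP _) (hU t)
      (lt_of_pow_lt_pow_left₀ 2 (norm2_nonneg _) ht)
  refine ⟨fun t₀ t₁ _ hlt habove => ?_, fun t ht => ?_⟩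
  · refine lt_of_pow_lt_pow_left₀ 2 (norm2_nonneg _) ?_
    exact strictAntiOn_Icc_of_hasDerivAt_neg_above hV hV_neg
      (fun s hs => pow_lt_pow_left₀ (habove s hs) hr two_ne_zero)
      (left_mem_Icc.2 hlt.le) (right_mem_Icc.2 hlt.le) hlt
  · rcases le_max_iff.1 (le_max_of_hasDerivAt_neg_above hV hV_neg ht) with h | h
    · exact le_max_of_le_left <|
        (pow_le_pow_iff_left₀ (norm2_nonneg _) (norm2_nonneg _) two_ne_zero).1 h
    · exact le_max_of_le_right <| (pow_le_pow_iff_left₀ (norm2_nonneg _) hr two_ne_zero).1 h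
end
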